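/- If a linear map 𝒜 : ℝ^{m×n} → ℝ^p satisfies ‖𝒜X‖₂² ≤ (1+δ)‖X‖_F² for all X ∈ ℝ^{m×n} with rank(X) ≤ r, then for every X ∈ ℝ^{m×n} (of arbitrary rank): ‖𝒜X‖₂ ≤ √(1+δ) (‖X‖_F + ‖X‖_*/√r), where ‖X‖_* is the sum of the singular values of X. -/

import Mathlib

/-!
Write `X = ∑ᵢ Rᵢ` with `Rᵢ = uᵢ uᵢᵀ X`, where `(uᵢ)` is an orthonormal eigenbasis of `X Xᵀ`: the
`Rᵢ` have rank one, are pairwise orthogonal for the Frobenius inner product, and their Frobenius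
norms are the singular values `σᵢ` of `X`. Order them so that the `σᵢ` decrease and group them
into consecutive blocks `Y₀, Y₁, …` of `r` terms. Each `Yₖ` has rank at most `r`, so
`‖𝒜X‖ ≤ √(1+δ) ∑ₖ ‖Yₖ‖_F`. Every singular value in block `k+1` is at most the mean of those in
block `k`, hence `‖Yₖ₊₁‖_F ≤ (∑_{i ∈ block k} σᵢ)/√r`; summing over `k` bounds the tail by
`‖X‖_*/√r`, while `‖Y₀‖_F ≤ ‖X‖_F`.
-/

open scoped BigOperators
open Matrix

noncomputable section

/-- Frobenius (trace) inner product of real matrices. -/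
def frobInner {m n : ℕ} (X Y : Matrix (Fin m) (Fin n) ℝ) : ℝ :=
  ∑ i, ∑ j, X i j * Y i j

/-- Frobenius norm of a real matrix. -/
def frobNorm {m n : ℕ} (X : Matrix (Fin m) (Fin n) ℝ) : ℝ :=
  Real.sqrt (frobInner X X)

/-- Euclidean norm of a vector in ℝ^p. -/
def vecNorm {p : ℕ} (b : Fin p → ℝ) : ℝ :=
  Real.sqrt (∑ i, b i ^ 2)

/-- Nuclear norm: the sum of the singular values of X (square roots of the
eigenvalues of X Xᵀ). -/
def nuclearNorm {m n : ℕ} (X : Matrix (Fin m) (Fin n) ℝ) : ℝ :=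
  ∑ i, Real.sqrt ((Matrix.isHermitian_mul_conjTranspose_self X).eigenvalues i)

open Finset

theorem Matrix.rank_add_le {K m n : Type*} [Field K] [Fintype m] [Fintype n]
    (A B : Matrix m n K) : (A + B).rank ≤ A.rank + B.rank := by
  unfold Matrix.rank
  rw [Matrix.mulVecLin_add]
  exact (Submodule.finrank_mono (LinearMap.range_add_le _ _)).trans
    (Submodule.finrank_add_le_finrank_add_finrank _ _)

theorem Matrix.rank_sum_le {ι K m n : Type*} [Field K] [Fintype m] [Fintype n]
    (s : Finset ι) (A : ι → Matrix m n K) : (∑ i ∈ s, A i).rank ≤ ∑ i ∈ s, (A i).rank :=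
  Finset.le_sum_of_subadditive (M := Matrix m n K) Matrix.rank (by simp) Matrix.rank_add_le s A

section Frobenius

variable {m n : ℕ}

theorem frobInner_comm (X Y : Matrix (Fin m) (Fin n) ℝ) : frobInner X Y = frobInner Y X := by
  simp only [frobInner, mul_comm]

theorem frobInner_sum_left {ι : Type*} (s : Finset ι) (M : ι → Matrix (Fin m) (Fin n) ℝ)
    (Y : Matrix (Fin m) (Fin n) ℝ) : frobInner (∑ i ∈ s, M i) Y = ∑ i ∈ s, frobInner (M i) Y := by
  simp only [frobInner, Matrix.sum_apply, sum_mul]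
  exact (sum_congr rfl fun _ _ => sum_comm).trans sum_comm

@[simp]
theorem frobInner_zero_left (Y : Matrix (Fin m) (Fin n) ℝ) : frobInner 0 Y = 0 := by
  simp [frobInner]

@[simp]
theorem frobInner_zero_right (X : Matrix (Fin m) (Fin n) ℝ) : frobInner X 0 = 0 := by
  simp [frobInner]

theorem frobInner_vecMulVec (a c : Fin m → ℝ) (b d : Fin n → ℝ) :
    frobInner (vecMulVec a b) (vecMulVec c d) = (a ⬝ᵥ c) * (b ⬝ᵥ d) := by
  simp only [frobInner, vecMulVec_apply, dotProduct, sum_mul_sum]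
  exact sum_congr rfl fun i _ => sum_congr rfl fun j _ => by ring

theorem frobNorm_nonneg (X : Matrix (Fin m) (Fin n) ℝ) : 0 ≤ frobNorm X :=
  Real.sqrt_nonneg _

@[simp]
theorem frobNorm_zero : frobNorm (0 : Matrix (Fin m) (Fin n) ℝ) = 0 := by
  simp [frobNorm]

theorem frobNorm_sq (X : Matrix (Fin m) (Fin n) ℝ) : frobNorm X ^ 2 = frobInner X X :=
  Real.sq_sqrt (sum_nonneg fun _ _ => sum_nonneg fun _ _ => mul_self_nonneg _)

theorem frobNorm_sum_sq_of_pairwise {ι : Type*} (s : Finset ι)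
    {R : ι → Matrix (Fin m) (Fin n) ℝ} (h : Pairwise fun i j => frobInner (R i) (R j) = 0) :
    frobNorm (∑ i ∈ s, R i) ^ 2 = ∑ i ∈ s, frobNorm (R i) ^ 2 := by
  rw [frobNorm_sq, frobInner_sum_left]
  refine sum_congr rfl fun i hi => ?_
  rw [frobInner_comm, frobInner_sum_left, sum_eq_single i (fun j _ hji => h hji) (absurd hi),
    frobNorm_sq]

end Frobenius

theorem vecNorm_eq_norm_toLp {p : ℕ} (b : Fin p → ℝ) : vecNorm b = ‖WithLp.toLp 2 b‖ := by
  simp [vecNorm, EuclideanSpace.norm_eq]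

theorem vecNorm_sum_le {ι : Type*} {p : ℕ} (s : Finset ι) (f : ι → Fin p → ℝ) :
    vecNorm (∑ i ∈ s, f i) ≤ ∑ i ∈ s, vecNorm (f i) := by
  simpa only [vecNorm_eq_norm_toLp, WithLp.toLp_sum] using
    norm_sum_le s fun i => WithLp.toLp 2 (f i)

theorem Finset.sum_range_mul_eq_sum_range_sum_Ico {M : Type*} [AddCommMonoid M] (f : ℕ → M)
    (r K : ℕ) : ∑ k ∈ range K, ∑ i ∈ Ico (r * k) (r * (k + 1)), f i = ∑ i ∈ range (r * K), f i := by
  induction K with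
  | zero => simp
  | succ K ih =>
    rw [sum_range_succ, ih, range_eq_Ico, range_eq_Ico,
      sum_Ico_consecutive _ (Nat.zero_le _) (Nat.mul_le_mul_left r K.le_succ)]

section Blocks

variable {a : ℕ → ℝ} {r : ℕ}

theorem sqrt_sum_sq_Ico_succ_le (ha0 : ∀ i, 0 ≤ a i) (ha : Antitone a) (hr : 0 < r) (k : ℕ) :
    √(∑ i ∈ Ico (r * (k + 1)) (r * (k + 2)), a i ^ 2)
      ≤ (∑ j ∈ Ico (r * k) (r * (k + 1)), a j) / √r := by
  set S := ∑ j ∈ Ico (r * k) (r * (k + 1)), a j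
  have hcard : ∀ l, #(Ico (r * l) (r * (l + 1))) = r := fun l => by
    rw [Nat.card_Ico, mul_add, mul_one, Nat.add_sub_cancel_left]
  have hr' : (0 : ℝ) < r := by exact_mod_cast hr
  have hle : ∀ i ∈ Ico (r * (k + 1)) (r * (k + 2)), a i ≤ S / r := by
    intro i hi
    rw [le_div_iff₀ hr']
    calc a i * r = ∑ _j ∈ Ico (r * k) (r * (k + 1)), a i := by
          rw [sum_const, hcard, nsmul_eq_mul, mul_comm]
      _ ≤ S := sum_le_sum fun j hj => ha (by simp only [mem_Ico] at hi hj; omega)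
  have hS : 0 ≤ S := sum_nonneg fun j _ => ha0 j
  calc √(∑ i ∈ Ico (r * (k + 1)) (r * (k + 2)), a i ^ 2)
      ≤ √(∑ _i ∈ Ico (r * (k + 1)) (r * (k + 2)), (S / r) ^ 2) :=
        Real.sqrt_le_sqrt (sum_le_sum fun i hi => pow_le_pow_left₀ (ha0 i) (hle i hi) 2)
    _ = S / √r := by
        rw [sum_const, hcard, nsmul_eq_mul, Real.sqrt_mul hr'.le, Real.sqrt_sq (by positivity)]
        field_simp
        rw [Real.sq_sqrt hr'.le, mul_comm]

theorem sum_sqrt_sum_sq_Ico_le (ha0 : ∀ i, 0 ≤ a i) (ha : Antitone a) (hr : 0 < r) (K : ℕ) :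
    ∑ k ∈ range K, √(∑ i ∈ Ico (r * k) (r * (k + 1)), a i ^ 2)
      ≤ √(∑ i ∈ range (r * K), a i ^ 2) + (∑ i ∈ range (r * K), a i) / √r := by
  cases K with
  | zero => simp
  | succ K =>
    have hfirst : √(∑ i ∈ Ico (r * 0) (r * (0 + 1)), a i ^ 2)
        ≤ √(∑ i ∈ range (r * (K + 1)), a i ^ 2) := by
      refine Real.sqrt_le_sqrt (sum_le_sum_of_subset_of_nonneg ?_ fun i _ _ => sq_nonneg (a i))
      simpa using Nat.le_mul_of_pos_right r K.succ_pos
    have htail : ∑ k ∈ range K, √(∑ i ∈ Ico (r * (k + 1)) (r * (k + 1 + 1)), a i ^ 2)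
        ≤ (∑ i ∈ range (r * (K + 1)), a i) / √r :=
      calc _ ≤ ∑ k ∈ range K, (∑ j ∈ Ico (r * k) (r * (k + 1)), a j) / √r :=
            sum_le_sum fun k _ => sqrt_sum_sq_Ico_succ_le ha0 ha hr k
        _ = (∑ i ∈ range (r * K), a i) / √r := by
            rw [← sum_div, sum_range_mul_eq_sum_range_sum_Ico]
        _ ≤ (∑ i ∈ range (r * (K + 1)), a i) / √r :=
            div_le_div_of_nonneg_right (sum_le_sum_of_subset_of_nonneg
              (range_subset_range.mpr (Nat.mul_le_mul_left r K.le_succ)) fun i _ _ => ha0 i)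
              (Real.sqrt_nonneg _)
    rw [sum_range_succ']
    linarith

end Blocks

section RIP

variable {m n p r : ℕ} {A : Matrix (Fin m) (Fin n) ℝ →ₗ[ℝ] (Fin p → ℝ)} {δ : ℝ}

theorem vecNorm_image_le_of_rank_le
    (hRIP : ∀ X : Matrix (Fin m) (Fin n) ℝ, X.rank ≤ r →
      vecNorm (A X) ^ 2 ≤ (1 + δ) * frobNorm X ^ 2)
    {X : Matrix (Fin m) (Fin n) ℝ} (hX : X.rank ≤ r) :
    vecNorm (A X) ≤ √(1 + δ) * frobNorm X := by
  rw [← Real.sqrt_sq (frobNorm_nonneg X), ← Real.sqrt_mul' _ (sq_nonneg _)]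
  exact Real.le_sqrt_of_sq_le (hRIP X hX)

theorem vecNorm_image_sum_le (hr : 0 < r)
    (hRIP : ∀ X : Matrix (Fin m) (Fin n) ℝ, X.rank ≤ r →
      vecNorm (A X) ^ 2 ≤ (1 + δ) * frobNorm X ^ 2)
    {R : ℕ → Matrix (Fin m) (Fin n) ℝ} (hR : ∀ j, (R j).rank ≤ 1)
    (horth : Pairwise fun i j => frobInner (R i) (R j) = 0)
    (hanti : Antitone fun j => frobNorm (R j)) (K : ℕ) :
    vecNorm (A (∑ j ∈ range (r * K), R j))
      ≤ √(1 + δ) * (frobNorm (∑ j ∈ range (r * K), R j)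
        + (∑ j ∈ range (r * K), frobNorm (R j)) / √r) := by
  set Y : ℕ → Matrix (Fin m) (Fin n) ℝ := fun k => ∑ j ∈ Ico (r * k) (r * (k + 1)), R j
  have hYrank : ∀ k, (Y k).rank ≤ r := fun k =>
    calc (Y k).rank ≤ ∑ j ∈ Ico (r * k) (r * (k + 1)), (R j).rank := Matrix.rank_sum_le _ _
      _ ≤ ∑ _j ∈ Ico (r * k) (r * (k + 1)), 1 := sum_le_sum fun j _ => hR j
      _ = r := by simp [mul_add]
  have hfrob (s : Finset ℕ) : frobNorm (∑ j ∈ s, R j) = √(∑ j ∈ s, frobNorm (R j) ^ 2) := by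
    rw [← frobNorm_sum_sq_of_pairwise s horth, Real.sqrt_sq (frobNorm_nonneg _)]
  calc vecNorm (A (∑ j ∈ range (r * K), R j)) = vecNorm (∑ k ∈ range K, A (Y k)) := by
        rw [← sum_range_mul_eq_sum_range_sum_Ico, map_sum]
    _ ≤ ∑ k ∈ range K, √(1 + δ) * frobNorm (Y k) :=
        (vecNorm_sum_le _ _).trans
          (sum_le_sum fun k _ => vecNorm_image_le_of_rank_le hRIP (hYrank k))
    _ = √(1 + δ) * ∑ k ∈ range K, √(∑ j ∈ Ico (r * k) (r * (k + 1)), frobNorm (R j) ^ 2) := by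
        simp only [Y, hfrob, mul_sum]
    _ ≤ _ := by
        rw [hfrob]
        gcongr
        exact sum_sqrt_sum_sq_Ico_le (fun j => frobNorm_nonneg _) hanti hr K

end RIP

section Decomposition

variable {m n : ℕ}

theorem exists_sum_rankOne_orthogonal (X : Matrix (Fin m) (Fin n) ℝ) :
    ∃ R : Fin m → Matrix (Fin m) (Fin n) ℝ, X = ∑ i, R i ∧ (∀ i, (R i).rank ≤ 1) ∧
      (Pairwise fun i j => frobInner (R i) (R j) = 0) ∧ nuclearNorm X = ∑ i, frobNorm (R i) := by
  set H := isHermitian_mul_conjTranspose_self X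
  set u : Fin m → Fin m → ℝ := fun i => ⇑(H.eigenvectorBasis i)
  have horthonormal : ∀ i j, u i ⬝ᵥ u j = if i = j then 1 else 0 := fun i j => by
    simpa [u, mul_apply, one_apply, dotProduct] using
      congr_fun₂ (mem_unitaryGroup_iff'.mp H.eigenvectorUnitary.2) i j
  have hcomplete : ∑ i, vecMulVec (u i) (u i) = 1 := by
    ext a b
    simpa [u, mul_apply, one_apply, Matrix.sum_apply, vecMulVec_apply] using
      congr_fun₂ (mem_unitaryGroup_iff.mp H.eigenvectorUnitary.2) a b
  have heigen : ∀ j, (X * Xᵀ) *ᵥ u j = H.eigenvalues j • u j := fun j => by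
    simpa [u, conjTranspose_eq_transpose_of_trivial] using H.mulVec_eigenvectorBasis j
  set R : Fin m → Matrix (Fin m) (Fin n) ℝ := fun i => vecMulVec (u i) (u i ᵥ* X)
  have hinner : ∀ i j, frobInner (R i) (R j) = if i = j then H.eigenvalues i else 0 := by
    intro i j
    rw [frobInner_vecMulVec, ← dotProduct_mulVec, ← mulVec_transpose, mulVec_mulVec, heigen,
      dotProduct_smul, horthonormal]
    split_ifs with h <;> simp [h]
  refine ⟨R, ?_, fun i => rank_vecMulVec_le _ _, fun i j hij => by simp [hinner, hij], ?_⟩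
  · rw [← Matrix.one_mul X, ← hcomplete, Matrix.sum_mul]
    simp only [R, vecMulVec_mul]
  · simp [nuclearNorm, frobNorm, hinner]

-- Indexing by `ℕ` and padding with zero matrices makes every block `[r * k, r * (k + 1))` full.
theorem exists_antitone_sum_rankOne_orthogonal (X : Matrix (Fin m) (Fin n) ℝ)
    {N : ℕ} (hN : m ≤ N) :
    ∃ R : ℕ → Matrix (Fin m) (Fin n) ℝ, X = ∑ j ∈ range N, R j ∧ (∀ j, (R j).rank ≤ 1) ∧
      (Pairwise fun i j => frobInner (R i) (R j) = 0) ∧ Antitone (fun j => frobNorm (R j)) ∧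
      nuclearNorm X = ∑ j ∈ range N, frobNorm (R j) := by
  obtain ⟨R, hX, hrank, horth, hnuc⟩ := exists_sum_rankOne_orthogonal X
  set π := Tuple.sort fun i => OrderDual.toDual (frobNorm (R i))
  have hsorted : Antitone fun i => frobNorm (R (π i)) :=
    monotone_toDual_comp_iff.mp (Tuple.monotone_sort fun i => OrderDual.toDual (frobNorm (R i)))
  set R' : ℕ → Matrix (Fin m) (Fin n) ℝ := fun j => if h : j < m then R (π ⟨j, h⟩) else 0
  have hsum : ∀ {M : Type} [AddCommMonoid M] (f : Matrix (Fin m) (Fin n) ℝ → M), f 0 = 0 →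
      ∑ j ∈ range N, f (R' j) = ∑ i, f (R i) := fun f hf => by
    rw [← sum_subset (range_subset_range.mpr hN) fun j _ hj => by
      rw [mem_range] at hj; simp only [R', dif_neg hj, hf],
      ← Fin.sum_univ_eq_sum_range]
    simpa [R'] using Equiv.sum_comp π (f ∘ R)
  refine ⟨R', hX.trans (hsum id rfl).symm, fun j => ?_, fun i j hij => ?_, fun i j hij => ?_,
    by rw [hsum frobNorm frobNorm_zero, hnuc]⟩
  · dsimp only [R']
    split_ifs
    exacts [hrank _, by simp]
  · dsimp only [R']
    split_ifs
    · exact horth fun h => hij (by simpa using π.injective h)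
    all_goals simp
  · by_cases hj : j < m
    · have hi := hij.trans_lt hj
      simpa [R', hi, hj] using hsorted (show (⟨i, hi⟩ : Fin m) ≤ ⟨j, hj⟩ from hij)
    · simpa [R', hj] using frobNorm_nonneg (R' i)

end Decomposition

theorem vecNorm_image_le_general {m n p r : ℕ}
    (A : Matrix (Fin m) (Fin n) ℝ →ₗ[ℝ] (Fin p → ℝ))
    (δ : ℝ) (hr : 1 ≤ r)
    (hRIP : ∀ X : Matrix (Fin m) (Fin n) ℝ, X.rank ≤ r →
      vecNorm (A X) ^ 2 ≤ (1 + δ) * frobNorm X ^ 2) :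
    ∀ X : Matrix (Fin m) (Fin n) ℝ,
      vecNorm (A X) ≤ Real.sqrt (1 + δ) * (frobNorm X + nuclearNorm X / Real.sqrt r) := by
  intro X
  obtain ⟨R, hX, hrank, horth, hanti, hnuc⟩ :=
    exists_antitone_sum_rankOne_orthogonal X (Nat.le_mul_of_pos_left m hr)
  rw [hnuc, hX]
  exact vecNorm_image_sum_le hr hRIP hrank horth hanti m

/-- Proposition 2.3: from the upper RIP bound on rank ≤ r matrices,
‖𝒜X‖₂ ≤ √(1+δ) (‖X‖_F + ‖X‖_*/√r) for every X. -/
theorem vecNorm_image_le {m n p r : ℕ}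
    (A : Matrix (Fin m) (Fin n) ℝ →ₗ[ℝ] (Fin p → ℝ))
    (δ : ℝ) (hδ : 0 ≤ δ) (hr : 1 ≤ r)
    (hRIP : ∀ X : Matrix (Fin m) (Fin n) ℝ, X.rank ≤ r →
      vecNorm (A X) ^ 2 ≤ (1 + δ) * frobNorm X ^ 2) :
    ∀ X : Matrix (Fin m) (Fin n) ℝ,
      vecNorm (A X) ≤ Real.sqrt (1 + δ) * (frobNorm X + nuclearNorm X / Real.sqrt r) :=
  vecNorm_image_le_general A δ hr hRIP
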